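/- arXiv:2306.14073 — 4 statements merged into one kernel-verified Lean document; each statement's English description precedes it below -/
import Mathlib

section
/- For every integer M ≥ 1, every integer r ≥ 1, and every non-prime integer k with r ≤ k ≤ M·r, one has Pr(r,k) ≤ (1 − 1/M)^(π(k)). -/
open scoped Classical

/-- A tuple `η : Fin r → ℕ` (with entries thought of as lying in `{1,…,M}`) is *admissible*
if no proper partial sum `η₁ + ⋯ + η_ℓ` (for `1 ≤ ℓ < r`) is a prime number. -/
def IsAdmissible (r : ℕ) (η : Fin r → ℕ) : Prop :=
  ∀ ℓ : ℕ, 1 ≤ ℓ → ℓ < r →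
    ¬ Nat.Prime (∑ i ∈ Finset.univ.filter (fun i : Fin r => (i : ℕ) < ℓ), η i)

/-- `PrRK M r k = M⁻ʳ · #{admissible tuples in {1,…,M}ʳ of length r with total sum k}`. -/
noncomputable def PrRK (M r k : ℕ) : ℝ :=
  (((Fintype.piFinset fun _ : Fin r => Finset.Icc 1 M).filter
      (fun η => IsAdmissible r η ∧ (∑ i, η i) = k)).card : ℝ) / (M : ℝ) ^ r

/-!
Induction on `r`, splitting off the last entry `j` of a tuple: an admissible tuple of length
`r + 1` and sum `k` is an admissible tuple of length `r` and non-prime sum `k - j`, followed by `j`.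
Let `t` be the number of `j ∈ [1, M]` with `k - j` prime; these are excluded, and since `k` is not
prime, every prime `p ≤ k` is either `≤ k - j` or of the form `k - i` with `i` one of those `t`
values, so `π(k - j) ≥ π(k) - t`. With `q = 1 - 1/M` this gives
`Pr(r+1, k) ≤ (M - t)/M · q^(π(k) - t) ≤ q^π(k)`, the last step by Bernoulli's inequality
`1 - t/M ≤ q^t`.
-/

open Finset

section PartialSums

variable {α : Type*} [AddCommMonoid α] {n ℓ : ℕ}

theorem Fin.sum_filter_val_lt_init (η : Fin (n + 1) → α) (hℓ : ℓ ≤ n) :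
    ∑ i ∈ univ.filter (fun i : Fin (n + 1) => (i : ℕ) < ℓ), η i
      = ∑ i ∈ univ.filter (fun i : Fin n => (i : ℕ) < ℓ), Fin.init η i := by
  simp only [sum_filter, Fin.sum_univ_castSucc, Fin.val_castSucc, Fin.val_last,
    if_neg (not_lt.2 hℓ), add_zero]
  rfl

theorem Fin.sum_filter_val_lt_self (η : Fin n → α) :
    ∑ i ∈ univ.filter (fun i : Fin n => (i : ℕ) < n), η i = ∑ i, η i := by
  rw [filter_true_of_mem fun i _ => i.isLt]

end PartialSums

theorem isAdmissible_succ_iff {n : ℕ} (η : Fin (n + 1) → ℕ) :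
    IsAdmissible (n + 1) η ↔
      IsAdmissible n (Fin.init η) ∧ ¬ (∑ i, Fin.init η i).Prime := by
  simp only [IsAdmissible]
  constructor
  · intro h
    refine ⟨fun ℓ hℓ hℓn => ?_, ?_⟩
    · rw [← Fin.sum_filter_val_lt_init η hℓn.le]
      exact h ℓ hℓ (by omega)
    · rcases Nat.eq_zero_or_pos n with rfl | hn
      · simp [Nat.not_prime_zero]
      · rw [← Fin.sum_filter_val_lt_self, ← Fin.sum_filter_val_lt_init η le_rfl]
        exact h n hn (by omega)
  · rintro ⟨h, hn⟩ ℓ hℓ hℓn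
    rw [Fin.sum_filter_val_lt_init η (by omega)]
    rcases (Nat.lt_succ_iff.mp hℓn).lt_or_eq with hlt | rfl
    · exact h ℓ hℓ hlt
    · rwa [Fin.sum_filter_val_lt_self]

noncomputable def admissibleTuples (M r k : ℕ) : Finset (Fin r → ℕ) :=
  (Fintype.piFinset fun _ : Fin r => Icc 1 M).filter
    (fun η => IsAdmissible r η ∧ ∑ i, η i = k)

/-- `j ≤ k` is not implied: for `j > k` the truncated `k - j` is `0`, which is not prime. -/
noncomputable def admissibleLastEntries (M k : ℕ) : Finset ℕ :=
  (Icc 1 M).filter fun j => j ≤ k ∧ ¬ (k - j).Prime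

theorem PrRK_eq_card_div (M r k : ℕ) :
    PrRK M r k = (#(admissibleTuples M r k) : ℝ) / (M : ℝ) ^ r := rfl

theorem snoc_mem_admissibleTuples_succ_iff {M r k j : ℕ} {ν : Fin r → ℕ} :
    Fin.snoc ν j ∈ admissibleTuples M (r + 1) k ↔
      j ∈ admissibleLastEntries M k ∧ ν ∈ admissibleTuples M r (k - j) := by
  have hsum : ∑ i, (Fin.snoc ν j : Fin (r + 1) → ℕ) i = ∑ i, ν i + j := by
    simp [Fin.sum_univ_castSucc]
  simp only [admissibleTuples, admissibleLastEntries, mem_filter, Fin.mem_piFinset_iff_last_init,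
    isAdmissible_succ_iff, Fin.init_snoc, Fin.snoc_last, hsum]
  constructor
  · rintro ⟨⟨hj, hν⟩, ⟨hadm, hprime⟩, hk⟩
    refine ⟨⟨hj, by omega, by rwa [← hk, Nat.add_sub_cancel]⟩, hν, hadm, by omega⟩
  · rintro ⟨⟨hj, hjk, hprime⟩, hν, hadm, hk⟩
    exact ⟨⟨hj, hν⟩, ⟨hadm, hk ▸ hprime⟩, by omega⟩

theorem card_admissibleTuples_succ (M r k : ℕ) :
    #(admissibleTuples M (r + 1) k)
      = ∑ j ∈ admissibleLastEntries M k, #(admissibleTuples M r (k - j)) := by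
  rw [← card_sigma]
  refine card_nbij' (fun η => ⟨η (Fin.last r), Fin.init η⟩) (fun p => Fin.snoc p.2 p.1)
    (fun η hη => ?_) (fun p hp => ?_) (fun η _ => Fin.snoc_init_self η) (fun p _ => ?_)
  · rw [mem_coe, ← Fin.snoc_init_self η, snoc_mem_admissibleTuples_succ_iff] at hη
    simpa using hη
  · exact snoc_mem_admissibleTuples_succ_iff.2 (mem_sigma.1 hp)
  · simp

theorem PrRK_succ (M r k : ℕ) :
    PrRK M (r + 1) k = (∑ j ∈ admissibleLastEntries M k, PrRK M r (k - j)) / M := by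
  simp only [PrRK_eq_card_div, card_admissibleTuples_succ, Nat.cast_sum, ← sum_div, pow_succ,
    div_div]

theorem primeCounting_le_primeCounting_sub_add {M k j : ℕ} (hk : ¬ k.Prime) (hjM : j ≤ M) :
    k.primeCounting ≤ (k - j).primeCounting + #((Icc 1 M).filter fun i => (k - i).Prime) := by
  simp only [Nat.primeCounting, ← Nat.primesBelow_card_eq_primeCounting']
  calc #(k + 1).primesBelow
      ≤ #((k - j + 1).primesBelow ∪
          ((Icc 1 M).filter fun i => (k - i).Prime).image (k - ·)) := by
        refine card_le_card fun p hp => ?_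
        have hpk : p ≠ k := by rintro rfl; exact hk (Nat.prime_of_mem_primesBelow hp)
        simp only [Nat.mem_primesBelow, mem_union, mem_image, mem_filter, mem_Icc] at hp ⊢
        by_cases hpj : p < k - j + 1
        · exact Or.inl ⟨hpj, hp.2⟩
        · have hkp : k - (k - p) = p := Nat.sub_sub_self (by omega)
          exact Or.inr ⟨k - p, ⟨⟨by omega, by omega⟩, by rw [hkp]; exact hp.2⟩, hkp⟩
    _ ≤ _ := (card_union_le _ _).trans (Nat.add_le_add_left card_image_le _)

theorem card_admissibleLastEntries_add_le (M k : ℕ) :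
    #(admissibleLastEntries M k) + #((Icc 1 M).filter fun i => (k - i).Prime) ≤ M := by
  have hsub : admissibleLastEntries M k ⊆ (Icc 1 M).filter fun i => ¬ (k - i).Prime :=
    fun i hi => by
      simp only [admissibleLastEntries, mem_filter] at hi ⊢
      exact ⟨hi.1, hi.2.2⟩
  calc _ ≤ #((Icc 1 M).filter fun i => ¬ (k - i).Prime)
          + #((Icc 1 M).filter fun i => (k - i).Prime) :=
        Nat.add_le_add_right (card_le_card hsub) _
    _ = M := by rw [add_comm, card_filter_add_card_filter_not, Nat.card_Icc, Nat.add_sub_cancel]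

theorem div_le_one_sub_one_div_pow {a t M : ℕ} (h : a + t ≤ M) :
    (a : ℝ) / M ≤ (1 - 1 / (M : ℝ)) ^ t := by
  rcases Nat.eq_zero_or_pos M with rfl | hM
  · obtain rfl : a = 0 := by omega
    simp
  have hM' : (0 : ℝ) < M := by exact_mod_cast hM
  have hinv : 1 / (M : ℝ) ≤ 1 := by rw [div_le_one hM']; exact_mod_cast hM
  calc (a : ℝ) / M ≤ 1 + t * (-(1 / (M : ℝ))) := by
        rw [div_le_iff₀ hM', add_mul, mul_assoc, neg_mul, one_div_mul_cancel hM'.ne']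
        have : (a : ℝ) + t ≤ M := by exact_mod_cast h
        linarith
    _ ≤ (1 + -(1 / (M : ℝ))) ^ t := one_add_mul_le_pow (by linarith) t
    _ = _ := by rw [← sub_eq_add_neg]

theorem one_sub_one_div_natCast_mem_Icc (M : ℕ) : 1 - 1 / (M : ℝ) ∈ Set.Icc 0 1 := by
  rw [one_div]
  exact ⟨sub_nonneg.2 (Nat.cast_inv_le_one M), sub_le_self _ (by positivity)⟩

theorem PrRK_zero_le (M k : ℕ) : PrRK M 0 k ≤ (1 - 1 / (M : ℝ)) ^ k.primeCounting := by
  rcases eq_or_ne k 0 with rfl | hk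
  · simp [PrRK, IsAdmissible]
  · simpa [PrRK, hk.symm] using pow_nonneg (one_sub_one_div_natCast_mem_Icc M).1 k.primeCounting

theorem PrRK_succ_le {M r k : ℕ} (hk : ¬ k.Prime)
    (ih : ∀ k', ¬ k'.Prime → PrRK M r k' ≤ (1 - 1 / (M : ℝ)) ^ k'.primeCounting) :
    PrRK M (r + 1) k ≤ (1 - 1 / (M : ℝ)) ^ k.primeCounting := by
  set q : ℝ := 1 - 1 / (M : ℝ)
  obtain ⟨hq0, hq1⟩ := one_sub_one_div_natCast_mem_Icc M
  set t := #((Icc 1 M).filter fun i => (k - i).Prime)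
  have hterm : ∀ j ∈ admissibleLastEntries M k,
      PrRK M r (k - j) ≤ q ^ (k.primeCounting - t) := by
    intro j hj
    simp only [admissibleLastEntries, mem_filter, mem_Icc] at hj
    have := primeCounting_le_primeCounting_sub_add hk hj.1.2
    exact (ih _ hj.2.2).trans (pow_le_pow_of_le_one hq0 hq1 (by omega))
  calc PrRK M (r + 1) k = (∑ j ∈ admissibleLastEntries M k, PrRK M r (k - j)) / M :=
        PrRK_succ M r k
    _ ≤ #(admissibleLastEntries M k) * q ^ (k.primeCounting - t) / M := by
        gcongr
        simpa using sum_le_card_nsmul _ _ _ hterm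
    _ = #(admissibleLastEntries M k) / M * q ^ (k.primeCounting - t) := by ring
    _ ≤ q ^ t * q ^ (k.primeCounting - t) := by
        gcongr
        exact div_le_one_sub_one_div_pow (card_admissibleLastEntries_add_le M k)
    _ ≤ q ^ k.primeCounting := by
        rw [← pow_add]
        exact pow_le_pow_of_le_one hq0 hq1 (by omega)

theorem PrRK_le_pow_general (M : ℕ) (r : ℕ) (k : ℕ)
    (hk : ¬ Nat.Prime k) :
    PrRK M r k ≤ (1 - 1 / (M : ℝ)) ^ k.primeCounting := by
  induction r generalizing k with
  | zero => exact PrRK_zero_le M k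
  | succ r ih => exact PrRK_succ_le hk ih

/-- For every M ≥ 1, r ≥ 1 and non-prime k with r ≤ k ≤ M·r,
Pr(r,k) ≤ (1 − 1/M)^{π(k)}. -/
theorem PrRK_le_pow (M : ℕ) (hM : 1 ≤ M) (r : ℕ) (hr : 1 ≤ r) (k : ℕ)
    (hk : ¬ Nat.Prime k) (hrk : r ≤ k) (hkM : k ≤ M * r) :
    PrRK M r k ≤ (1 - 1 / (M : ℝ)) ^ k.primeCounting :=
  PrRK_le_pow_general M r k hk
end

section
/- For every integer M ≥ 1 and every integer r ≥ 2, one has Pr_P(r) ≤ Pr_N(r−1) · (max over integers k with r−1 ≤ k ≤ M·(r−1) of #{j ∈ {1,…,M} : k+j is prime}) / M. -/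
open scoped Classical

/-- `PrP M r = M⁻ʳ · #{admissible tuples in {1,…,M}ʳ of length r whose total sum is prime}`. -/
noncomputable def PrP (M r : ℕ) : ℝ :=
  (((Fintype.piFinset fun _ : Fin r => Finset.Icc 1 M).filter
      (fun η => IsAdmissible r η ∧ Nat.Prime (∑ i, η i))).card : ℝ) / (M : ℝ) ^ r

/-- `PrN M r = M⁻ʳ · #{admissible tuples in {1,…,M}ʳ of length r whose total sum is not prime}`. -/
noncomputable def PrN (M r : ℕ) : ℝ :=
  (((Fintype.piFinset fun _ : Fin r => Finset.Icc 1 M).filter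
      (fun η => IsAdmissible r η ∧ ¬ Nat.Prime (∑ i, η i))).card : ℝ) / (M : ℝ) ^ r

lemma sum_filter_castSucc (s ℓ : ℕ) (hℓ : ℓ ≤ s) (η : Fin (s+1) → ℕ) :
    ∑ i ∈ Finset.univ.filter (fun i : Fin (s+1) => (i : ℕ) < ℓ), η i
    = ∑ i ∈ Finset.univ.filter (fun i : Fin s => (i : ℕ) < ℓ), η i.castSucc := by
  rw [Finset.sum_filter, Finset.sum_filter, Fin.sum_univ_castSucc]
  simp [Fin.val_last, Nat.not_lt.mpr hℓ]

/-- For M ≥ 1 and r ≥ 2: Pr_P(r) ≤ Pr_N(r−1) · (max over k with r−1 ≤ k ≤ M(r−1) of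
#{j ∈ {1,…,M} : k+j prime}) / M. -/
theorem PrP_le_max (M : ℕ) (hM : 1 ≤ M) (r : ℕ) (hr : 2 ≤ r) :
    PrP M r ≤ PrN M (r - 1) *
      ((((Finset.Icc (r - 1) (M * (r - 1))).sup'
            (Finset.nonempty_Icc.mpr (Nat.le_mul_of_pos_left _ hM))
            (fun k => ((Finset.Icc 1 M).filter (fun j => Nat.Prime (k + j))).card) : ℕ) : ℝ)
        / (M : ℝ)) := by

  obtain ⟨s, rfl⟩ : ∃ s, r = s + 1 := ⟨r - 1, by omega⟩
  have hs : 1 ≤ s := by omega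
  simp only [Nat.add_sub_cancel]
  set A := (Fintype.piFinset fun _ : Fin (s+1) => Finset.Icc 1 M).filter
      (fun η => IsAdmissible (s+1) η ∧ Nat.Prime (∑ i, η i)) with hA
  set B := (Fintype.piFinset fun _ : Fin s => Finset.Icc 1 M).filter
      (fun η => IsAdmissible s η ∧ ¬ Nat.Prime (∑ i, η i)) with hB
  set K := (Finset.Icc s (M * s)).sup'
            (Finset.nonempty_Icc.mpr (Nat.le_mul_of_pos_left _ hM))
            (fun k => ((Finset.Icc 1 M).filter (fun j => Nat.Prime (k + j))).card) with hK
  -- key cardinality bound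
  have key : A.card ≤ B.card * K := by
    set T : Finset ((_ : Fin s → ℕ) × ℕ) :=
      B.sigma (fun η' => (Finset.Icc 1 M).filter (fun j => Nat.Prime ((∑ i, η' i) + j))) with hT
    have h1 : A.card ≤ T.card := by
      apply Finset.card_le_card_of_injOn (fun η => ⟨Fin.init η, η (Fin.last s)⟩)
      · intro η hη
        rw [hA, Finset.mem_coe, Finset.mem_filter, Fintype.mem_piFinset] at hη
        obtain ⟨hmem, hadm, hprime⟩ := hη
        have hsum : ∑ i, η i = (∑ i, Fin.init η i) + η (Fin.last s) :=
          Fin.sum_univ_castSucc η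
        have hinit_sum : ∑ i, Fin.init η i
            = ∑ i ∈ Finset.univ.filter (fun i : Fin (s+1) => (i : ℕ) < s), η i := by
          rw [sum_filter_castSucc s s le_rfl η]
          simp [Fin.init]
        beta_reduce
        rw [hT, Finset.mem_coe, Finset.mem_sigma]
        refine ⟨?_, ?_⟩
        · rw [hB, Finset.mem_filter, Fintype.mem_piFinset]
          refine ⟨fun i => hmem i.castSucc, ?_, ?_⟩
          · intro ℓ h1ℓ hℓs
            have := hadm ℓ h1ℓ (by omega)
            rw [sum_filter_castSucc s ℓ (le_of_lt hℓs) η] at this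
            simpa [Fin.init] using this
          · rw [hinit_sum]
            exact hadm s hs (by omega)
        · rw [Finset.mem_filter]
          exact ⟨hmem (Fin.last s), by rw [← hsum]; exact hprime⟩
      · intro η₁ h₁ η₂ h₂ heq
        have hi : Fin.init η₁ = Fin.init η₂ := congrArg Sigma.fst heq
        have hl' : η₁ (Fin.last s) = η₂ (Fin.last s) :=
          eq_of_heq (Sigma.ext_iff.mp heq).2
        funext i
        rcases Fin.eq_castSucc_or_eq_last i with ⟨j, rfl⟩ | rfl
        · exact congrFun hi j
        · exact hl'
    have h2 : T.card ≤ B.card * K := by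
      rw [hT, Finset.card_sigma]
      apply Finset.sum_le_card_nsmul
      intro η' hη'
      rw [hB, Finset.mem_filter, Fintype.mem_piFinset] at hη'
      obtain ⟨hmem, _, _⟩ := hη'
      have hk : (∑ i, η' i) ∈ Finset.Icc s (M * s) := by
        rw [Finset.mem_Icc]
        constructor
        · calc s = ∑ _i : Fin s, 1 := by simp
            _ ≤ ∑ i, η' i := Finset.sum_le_sum fun i _ =>
                (Finset.mem_Icc.mp (hmem i)).1
        · calc ∑ i, η' i ≤ ∑ _i : Fin s, M := Finset.sum_le_sum fun i _ =>
                (Finset.mem_Icc.mp (hmem i)).2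
            _ = M * s := by simp [Nat.mul_comm]
      exact Finset.le_sup'
        (fun k => ((Finset.Icc 1 M).filter (fun j => Nat.Prime (k + j))).card) hk
    omega
  -- now the real arithmetic
  have hM0 : (0:ℝ) < M := by exact_mod_cast hM
  rw [PrP, PrN]
  show (A.card : ℝ) / (M:ℝ) ^ (s+1) ≤ (B.card : ℝ) / (M:ℝ) ^ s * ((K:ℝ) / M)
  have e : (B.card : ℝ) / (M:ℝ) ^ s * ((K:ℝ) / M)
      = ((B.card * K : ℕ) : ℝ) / (M:ℝ) ^ (s+1) := by
    push_cast
    rw [div_mul_div_comm, ← pow_succ]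
  rw [e]
  gcongr
end

section
/- For every integer M ≥ 1 and every integer r ≥ 2, one has Pr_N(r) ≥ Pr_N(r−1) · (min over integers k with r−1 ≤ k ≤ M·(r−1) of #{j ∈ {1,…,M} : k+j is not prime}) / M. -/
open scoped Classical

lemma sum_snoc_filter (n ℓ : ℕ) (hℓ : ℓ ≤ n) (η : Fin n → ℕ) (j : ℕ) :
    ∑ i ∈ Finset.univ.filter (fun i : Fin (n+1) => (i : ℕ) < ℓ), Fin.snoc η j i
      = ∑ i ∈ Finset.univ.filter (fun i : Fin n => (i : ℕ) < ℓ), η i := by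
  rw [Finset.sum_filter, Finset.sum_filter, Fin.sum_univ_castSucc]
  simp only [Fin.snoc_castSucc, Fin.coe_castSucc, Fin.snoc_last, Fin.val_last]
  rw [if_neg (by omega), add_zero]

lemma sum_snoc (n : ℕ) (η : Fin n → ℕ) (j : ℕ) :
    ∑ i, Fin.snoc η j i = (∑ i, η i) + j := by
  rw [Fin.sum_univ_castSucc]
  simp


/-- For M ≥ 1 and r ≥ 2: Pr_N(r) ≥ Pr_N(r−1) · (min over k with r−1 ≤ k ≤ M(r−1) of
#{j ∈ {1,…,M} : k+j not prime}) / M. -/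
theorem PrN_ge_min (M : ℕ) (hM : 1 ≤ M) (r : ℕ) (hr : 2 ≤ r) :
    PrN M r ≥ PrN M (r - 1) *
      ((((Finset.Icc (r - 1) (M * (r - 1))).inf'
            (Finset.nonempty_Icc.mpr (Nat.le_mul_of_pos_left _ hM))
            (fun k => ((Finset.Icc 1 M).filter (fun j => ¬ Nat.Prime (k + j))).card) : ℕ) : ℝ)
        / (M : ℝ)) := by
  obtain ⟨n, rfl⟩ : ∃ n, r = n + 1 := ⟨r - 1, by omega⟩
  have hn : 1 ≤ n := by omega
  simp only [Nat.add_sub_cancel]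
  set m : ℕ := (Finset.Icc n (M * n)).inf'
      (Finset.nonempty_Icc.mpr (Nat.le_mul_of_pos_left _ hM))
      (fun k => ((Finset.Icc 1 M).filter (fun j => ¬ Nat.Prime (k + j))).card) with hm
  set A := (Fintype.piFinset fun _ : Fin (n+1) => Finset.Icc 1 M).filter
      (fun η => IsAdmissible (n+1) η ∧ ¬ Nat.Prime (∑ i, η i)) with hA
  set B := (Fintype.piFinset fun _ : Fin n => Finset.Icc 1 M).filter
      (fun η => IsAdmissible n η ∧ ¬ Nat.Prime (∑ i, η i)) with hB
  -- key counting inequality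
  have key : B.card * m ≤ A.card := by
    have h1 : B.card * m ≤ ∑ η ∈ B,
        ((Finset.Icc 1 M).filter (fun j => ¬ Nat.Prime ((∑ i, η i) + j))).card := by
      calc B.card * m = ∑ _η ∈ B, m := by rw [Finset.sum_const, smul_eq_mul, mul_comm]
        _ ≤ _ := by
          apply Finset.sum_le_sum
          intro η hη
          apply Finset.inf'_le
          rw [Finset.mem_Icc]
          simp only [hB, Finset.mem_filter, Fintype.mem_piFinset, Finset.mem_Icc] at hη
          constructor
          · calc n = ∑ _i : Fin n, 1 := by simp
              _ ≤ ∑ i, η i := Finset.sum_le_sum fun i _ => (hη.1 i).1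
          · calc ∑ i, η i ≤ ∑ _i : Fin n, M := Finset.sum_le_sum fun i _ => (hη.1 i).2
              _ = M * n := by simp [mul_comm]
    have h2 : ∑ η ∈ B,
        ((Finset.Icc 1 M).filter (fun j => ¬ Nat.Prime ((∑ i, η i) + j))).card ≤ A.card := by
      rw [← Finset.card_sigma]
      apply Finset.card_le_card_of_injOn (fun p => Fin.snoc p.1 p.2)
      · rintro ⟨η, j⟩ hp
        simp only [Finset.mem_coe, Finset.mem_sigma, Finset.mem_filter, Finset.mem_Icc] at hp
        obtain ⟨hηB, hj1M, hjnp⟩ := hp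
        simp only [hB, Finset.mem_filter, Fintype.mem_piFinset] at hηB
        obtain ⟨hηmem, hηadm, hηnp⟩ := hηB
        simp only [hA, Finset.mem_coe, Finset.mem_filter, Fintype.mem_piFinset]
        refine ⟨fun i => ?_, fun ℓ hℓ1 hℓ => ?_, ?_⟩
        · induction i using Fin.lastCases with
          | last => simp only [Fin.snoc_last]; exact Finset.mem_Icc.mpr hj1M
          | cast i => simp only [Fin.snoc_castSucc]; exact hηmem i
        · rcases Nat.lt_or_ge ℓ n with h | h
          · rw [sum_snoc_filter n ℓ (le_of_lt h)]
            exact hηadm ℓ hℓ1 h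
          · have hℓn : ℓ = n := Nat.le_antisymm (Nat.lt_succ_iff.mp hℓ) h
            rw [hℓn, sum_snoc_filter n n le_rfl]
            have huniv : Finset.univ.filter (fun i : Fin n => (i : ℕ) < n) = Finset.univ := by
              ext i; simp [i.isLt]
            rw [huniv]
            exact hηnp
        · rw [sum_snoc n η j]
          exact hjnp
      · rintro ⟨η, j⟩ hp ⟨η', j'⟩ hp' heq
        have hj : j = j' := by
          have := congrFun heq (Fin.last n)
          simpa using this
        have hη : η = η' := by
          funext i
          have := congrFun heq i.castSucc
          simpa using this
        simp [hη, hj]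
    exact le_trans h1 h2
  -- transfer to reals
  have hMpos : (0:ℝ) < M := by exact_mod_cast hM
  have hpow : (0:ℝ) < (M:ℝ) ^ (n+1) := pow_pos hMpos _
  rw [ge_iff_le, PrN, PrN, div_mul_div_comm, ← pow_succ]
  gcongr
  exact_mod_cast key
end

section
/- As M → ∞, the tail sum Σ_{r ≥ R₂+1} r·Pr_P(r) tends to 0, where R₂ = M²; that is, for every ε > 0 there is a threshold M₀ such that for all integers M ≥ M₀ the series Σ_{r ≥ R₂+1} r·Pr_P(r) converges and is at most ε. -/
open scoped Classical

namespace FarTailAux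

open Finset


open Finset

/-- partial sum of the first `ℓ` entries -/
def psum {m : ℕ} (η : Fin m → ℕ) (ℓ : ℕ) : ℕ :=
  ∑ i ∈ Finset.univ.filter (fun i : Fin m => (i : ℕ) < ℓ), η i

/-- tuples in `{1,…,M}^m` all of whose partial sums (including the total) are non-prime -/
noncomputable def adm (M m : ℕ) : Finset (Fin m → ℕ) :=
  (Fintype.piFinset fun _ : Fin m => Finset.Icc 1 M).filter
    (fun η => ∀ ℓ : ℕ, 1 ≤ ℓ → ℓ ≤ m → ¬ Nat.Prime (psum η ℓ))

noncomputable def allowed (M s : ℕ) : Finset ℕ :=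
  (Finset.Icc 1 M).filter fun v => ¬ Nat.Prime (s + v)

lemma mem_adm {M m : ℕ} {η : Fin m → ℕ} :
    η ∈ adm M m ↔ (∀ i, η i ∈ Finset.Icc 1 M) ∧
      ∀ ℓ : ℕ, 1 ≤ ℓ → ℓ ≤ m → ¬ Nat.Prime (psum η ℓ) := by
  simp [adm, Fintype.mem_piFinset]

lemma psum_init {m : ℕ} (η : Fin (m + 1) → ℕ) {ℓ : ℕ} (h : ℓ ≤ m) :
    psum (Fin.init η) ℓ = psum η ℓ := by
  unfold psum
  rw [Finset.sum_filter, Finset.sum_filter, Fin.sum_univ_castSucc]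
  have hlast : ¬ (m < ℓ) := by omega
  simp [hlast, Fin.init, Fin.val_last]

lemma psum_total {m : ℕ} (η : Fin m → ℕ) : psum η m = ∑ i, η i := by
  unfold psum
  rw [Finset.filter_true_of_mem]
  intro i _
  exact i.isLt

lemma sum_snoc {m : ℕ} (σ : Fin m → ℕ) (v : ℕ) :
    ∑ i, (Fin.snoc σ v : Fin (m + 1) → ℕ) i = (∑ i, σ i) + v := by
  rw [Fin.sum_univ_castSucc]
  simp


lemma bernoulli_aux {M ν : ℕ} (hM : 2 ≤ M) (hν : ν ≤ M) :
    ((M : ℝ) - ν) * ((M : ℝ) / ((M : ℝ) - 1)) ^ ν ≤ (M : ℝ) := by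
  have hM2 : (2:ℝ) ≤ (M:ℝ) := by exact_mod_cast hM
  have hM1 : (0:ℝ) < (M:ℝ) - 1 := by linarith
  have hM0 : (0:ℝ) < (M:ℝ) := by linarith
  have key : 1 + (ν:ℝ) * (-(1/(M:ℝ))) ≤ (1 + (-(1/(M:ℝ)))) ^ ν := by
    apply one_add_mul_le_pow
    have h1 : (0:ℝ) < 1/(M:ℝ) := by positivity
    have h1' : 1/(M:ℝ) ≤ 1 := by rw [div_le_one hM0]; linarith
    linarith
  have h2 : ((M:ℝ) - ν) / (M:ℝ) ≤ (((M:ℝ) - 1)/(M:ℝ)) ^ ν := by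
    have e1 : ((M:ℝ) - ν)/(M:ℝ) = 1 + (ν:ℝ) * (-(1/(M:ℝ))) := by field_simp; ring
    have e2 : (1 + (-(1/(M:ℝ))) : ℝ) = ((M:ℝ)-1)/(M:ℝ) := by field_simp; ring
    rw [e1, ← e2]; exact key
  have hpos : (0:ℝ) ≤ ((M:ℝ)/((M:ℝ)-1))^ν := by positivity
  have h3 := mul_le_mul_of_nonneg_right h2 hpos
  calc ((M:ℝ) - ν) * ((M:ℝ)/((M:ℝ)-1))^ν
      = (((M:ℝ) - ν)/(M:ℝ) * ((M:ℝ)/((M:ℝ)-1))^ν) * (M:ℝ) := by field_simp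
    _ ≤ ((((M:ℝ)-1))/(M:ℝ))^ν * ((M:ℝ)/((M:ℝ)-1))^ν * (M:ℝ) := by
        exact mul_le_mul_of_nonneg_right h3 (le_of_lt hM0)
    _ = (M:ℝ) := by
        rw [← mul_pow]
        have h4 : ((M:ℝ)-1)/(M:ℝ) * ((M:ℝ)/((M:ℝ)-1)) = 1 := by field_simp
        rw [h4, one_pow, one_mul]

lemma primeCounting_window (M s : ℕ) :
    Nat.primeCounting (s + M) ≤ Nat.primeCounting s
      + ((Finset.Icc 1 M).filter fun v => Nat.Prime (s + v)).card := by
  have hcc : ∀ n : ℕ, Nat.primeCounting n = ((Finset.range (n+1)).filter Nat.Prime).card := by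
    intro n
    rw [Nat.primeCounting, Nat.primeCounting', Nat.count_eq_card_filter_range]
  have hsplit : Finset.range (s + M + 1) = Finset.range (s+1) ∪ Finset.Ico (s+1) (s+M+1) := by
    rw [Finset.range_eq_Ico, Finset.range_eq_Ico, Finset.Ico_union_Ico_eq_Ico (by omega) (by omega)]
  have hbij : ((Finset.Ico (s+1) (s+M+1)).filter Nat.Prime).card
      = ((Finset.Icc 1 M).filter fun v => Nat.Prime (s + v)).card := by
    apply Finset.card_nbij' (fun p => p - s) (fun v => s + v)
    · intro p hp
      simp only [Finset.mem_coe, Finset.mem_filter, Finset.mem_Ico] at hp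
      simp only [Finset.mem_coe, Finset.mem_filter, Finset.mem_Icc]
      have : s + (p - s) = p := by omega
      refine ⟨⟨by omega, by omega⟩, by rw [this]; exact hp.2⟩
    · intro v hv
      simp only [Finset.mem_coe, Finset.mem_filter, Finset.mem_Icc] at hv
      simp only [Finset.mem_coe, Finset.mem_filter, Finset.mem_Ico]
      exact ⟨⟨by omega, by omega⟩, hv.2⟩
    · intro p hp
      simp only [Finset.mem_coe, Finset.mem_filter, Finset.mem_Ico] at hp
      beta_reduce
      omega
    · intro v hv
      simp only [Finset.mem_coe, Finset.mem_filter, Finset.mem_Icc] at hv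
      beta_reduce
      omega
  calc Nat.primeCounting (s + M)
      = ((Finset.range (s+M+1)).filter Nat.Prime).card := hcc _
    _ ≤ ((Finset.range (s+1)).filter Nat.Prime).card
        + ((Finset.Ico (s+1) (s+M+1)).filter Nat.Prime).card := by
        rw [hsplit, Finset.filter_union]
        exact Finset.card_union_le _ _
    _ = Nat.primeCounting s
        + ((Finset.Icc 1 M).filter fun v => Nat.Prime (s + v)).card := by
        rw [hcc, hbij]


lemma inner_bound {M : ℕ} (hM : 2 ≤ M) (s : ℕ) :
    ∑ v ∈ allowed M s, ((M:ℝ)/((M:ℝ)-1)) ^ Nat.primeCounting (s + v)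
      ≤ (M:ℝ) * ((M:ℝ)/((M:ℝ)-1)) ^ Nat.primeCounting s := by
  have hM2 : (2:ℝ) ≤ (M:ℝ) := by exact_mod_cast hM
  have hlam1 : 1 ≤ (M:ℝ)/((M:ℝ)-1) := by
    rw [le_div_iff₀ (by linarith)]; linarith
  set ν := ((Finset.Icc 1 M).filter fun v => Nat.Prime (s + v)).card with hνdef
  have hνM : ν ≤ M := by
    have := Finset.card_filter_le (Finset.Icc 1 M) (fun v => Nat.Prime (s + v))
    simpa [Nat.card_Icc] using this
  have hcard : (allowed M s).card = M - ν := by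
    have h := Finset.card_filter_add_card_filter_not
      (s := Finset.Icc 1 M) (p := fun v => Nat.Prime (s + v))
    have hIcc : (Finset.Icc 1 M).card = M := by simp
    unfold allowed
    omega
  have hterm : ∀ v ∈ allowed M s,
      ((M:ℝ)/((M:ℝ)-1)) ^ Nat.primeCounting (s+v)
        ≤ ((M:ℝ)/((M:ℝ)-1)) ^ (Nat.primeCounting s + ν) := by
    intro v hv
    apply pow_le_pow_right₀ hlam1
    have hvM : v ≤ M := by
      simp only [allowed, Finset.mem_filter, Finset.mem_Icc] at hv
      exact hv.1.2
    calc Nat.primeCounting (s+v) ≤ Nat.primeCounting (s+M) :=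
          Nat.monotone_primeCounting (by omega)
      _ ≤ _ := primeCounting_window M s
  calc ∑ v ∈ allowed M s, ((M:ℝ)/((M:ℝ)-1)) ^ Nat.primeCounting (s + v)
      ≤ (allowed M s).card • (((M:ℝ)/((M:ℝ)-1)) ^ (Nat.primeCounting s + ν)) :=
        Finset.sum_le_card_nsmul _ _ _ hterm
    _ = ((M - ν : ℕ) : ℝ) * ((M:ℝ)/((M:ℝ)-1)) ^ (Nat.primeCounting s + ν) := by
        rw [hcard, nsmul_eq_mul]
    _ = (((M:ℝ) - ν) * ((M:ℝ)/((M:ℝ)-1)) ^ ν) * ((M:ℝ)/((M:ℝ)-1)) ^ Nat.primeCounting s := by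
        rw [Nat.cast_sub hνM, pow_add]; ring
    _ ≤ (M:ℝ) * ((M:ℝ)/((M:ℝ)-1)) ^ Nat.primeCounting s := by
        apply mul_le_mul_of_nonneg_right (bernoulli_aux hM hνM)
        positivity

lemma sum_adm_succ (M m : ℕ) (F : ℕ → ℝ) :
    ∑ η ∈ adm M (m+1), F (∑ i, η i)
      = ∑ σ ∈ adm M m, ∑ v ∈ allowed M (∑ i, σ i), F ((∑ i, σ i) + v) := by
  rw [Finset.sum_sigma']
  apply Finset.sum_nbij' (i := fun η => (⟨Fin.init η, η (Fin.last m)⟩ :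
      (σ : Fin m → ℕ) × ℕ)) (j := fun x => Fin.snoc x.1 x.2)
  · -- hi : maps into sigma
    intro η hη
    rw [mem_adm] at hη
    obtain ⟨hpi, hps⟩ := hη
    rw [Finset.mem_sigma]
    constructor
    · rw [mem_adm]
      refine ⟨fun i => hpi _, fun ℓ h1 h2 => ?_⟩
      rw [psum_init η h2]
      exact hps ℓ h1 (by omega)
    · simp only [allowed, Finset.mem_filter]
      refine ⟨hpi _, ?_⟩
      have : (∑ i, Fin.init η i) + η (Fin.last m) = ∑ i, η i := by
        rw [Fin.sum_univ_castSucc]; simp [Fin.init]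
      rw [this, ← psum_total η]
      exact hps (m+1) (by omega) (by omega)
  · -- hj
    intro x hx
    rw [Finset.mem_sigma] at hx
    obtain ⟨hσ, hv⟩ := hx
    rw [mem_adm] at hσ
    simp only [allowed, Finset.mem_filter] at hv
    rw [mem_adm]
    constructor
    · intro i
      refine Fin.lastCases ?_ ?_ i
      · rw [Fin.snoc_last]; exact hv.1
      · intro j; rw [Fin.snoc_castSucc]; exact hσ.1 j
    · intro ℓ h1 h2
      rcases Nat.lt_or_ge ℓ (m+1) with h | h
      · have hℓm : ℓ ≤ m := by omega
        rw [← psum_init _ hℓm, Fin.init_snoc]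
        exact hσ.2 ℓ h1 hℓm
      · have hℓ : ℓ = m + 1 := by omega
        subst hℓ
        rw [psum_total, sum_snoc]
        exact hv.2
  · -- left inverse
    intro η _
    exact Fin.snoc_init_self η
  · -- right inverse
    intro x hx
    ext
    · rw [Fin.init_snoc]
    · rw [Fin.snoc_last]
  · -- values
    intro η hη
    congr 1
    rw [Fin.sum_univ_castSucc]
    simp [Fin.init]


lemma weighted_le {M : ℕ} (hM : 2 ≤ M) (m : ℕ) :
    ∑ η ∈ adm M m, ((M:ℝ)/((M:ℝ)-1)) ^ Nat.primeCounting (∑ i, η i) ≤ (M:ℝ) ^ m := by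
  induction m with
  | zero =>
    have h1 : (adm M 0).card ≤ 1 := by
      refine le_trans (Finset.card_le_card (Finset.filter_subset _ _)) ?_
      rw [Fintype.card_piFinset]
      simp
    calc ∑ η ∈ adm M 0, ((M:ℝ)/((M:ℝ)-1)) ^ Nat.primeCounting (∑ i, η i)
        = ∑ _η ∈ adm M 0, (1:ℝ) := by
          apply Finset.sum_congr rfl
          intro η _
          simp
      _ = ((adm M 0).card : ℝ) := by simp
      _ ≤ 1 := by exact_mod_cast h1
      _ = (M:ℝ) ^ 0 := by simp
  | succ m ih =>
    rw [sum_adm_succ M m (fun s => ((M:ℝ)/((M:ℝ)-1)) ^ Nat.primeCounting s)]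
    calc ∑ σ ∈ adm M m, ∑ v ∈ allowed M (∑ i, σ i),
          ((M:ℝ)/((M:ℝ)-1)) ^ Nat.primeCounting ((∑ i, σ i) + v)
        ≤ ∑ σ ∈ adm M m, (M:ℝ) * ((M:ℝ)/((M:ℝ)-1)) ^ Nat.primeCounting (∑ i, σ i) :=
          Finset.sum_le_sum (fun σ _ => inner_bound hM _)
      _ = (M:ℝ) * ∑ σ ∈ adm M m, ((M:ℝ)/((M:ℝ)-1)) ^ Nat.primeCounting (∑ i, σ i) := by
          rw [Finset.mul_sum]
      _ ≤ (M:ℝ) * (M:ℝ)^m := by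
          apply mul_le_mul_of_nonneg_left ih (by positivity)
      _ = (M:ℝ)^(m+1) := by ring

lemma card_adm_le {M : ℕ} (hM : 2 ≤ M) (m : ℕ) :
    ((adm M m).card : ℝ) ≤ (M:ℝ)^m * (((M:ℝ)-1)/(M:ℝ)) ^ Nat.primeCounting m := by
  have hM2 : (2:ℝ) ≤ (M:ℝ) := by exact_mod_cast hM
  have hlam1 : 1 ≤ (M:ℝ)/((M:ℝ)-1) := by
    rw [le_div_iff₀ (by linarith)]; linarith
  have key : ((adm M m).card : ℝ) * ((M:ℝ)/((M:ℝ)-1)) ^ Nat.primeCounting m ≤ (M:ℝ)^m := by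
    refine le_trans ?_ (weighted_le hM m)
    rw [← nsmul_eq_mul, ← Finset.sum_const]
    apply Finset.sum_le_sum
    intro η hη
    apply pow_le_pow_right₀ hlam1
    apply Nat.monotone_primeCounting
    rw [mem_adm] at hη
    calc m = ∑ _i : Fin m, 1 := by simp
      _ ≤ ∑ i, η i := Finset.sum_le_sum (fun i _ => (Finset.mem_Icc.mp (hη.1 i)).1)
  have hpow : (0:ℝ) < ((M:ℝ)/((M:ℝ)-1)) ^ Nat.primeCounting m := by positivity
  rw [← le_div_iff₀ hpow] at key
  refine le_trans key (le_of_eq ?_)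
  rw [div_eq_mul_inv, ← inv_pow, inv_div]

lemma card_S_le (M r : ℕ) (hr : 1 ≤ r) :
    (((Fintype.piFinset fun _ : Fin r => Finset.Icc 1 M).filter
      (fun η => IsAdmissible r η ∧ Nat.Prime (∑ i, η i))).card)
      ≤ M * (adm M (r-1)).card := by
  obtain ⟨m, rfl⟩ : ∃ m, r = m + 1 := ⟨r - 1, by omega⟩
  refine le_trans (Finset.card_le_mul_card_image_of_maps_to
    (f := fun η => Fin.init η) (t := adm M m) ?_ M ?_) (le_of_eq (by congr 2))
  · intro η hη
    rw [Finset.mem_filter] at hη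
    obtain ⟨hpi, hadm, _⟩ := hη
    rw [Fintype.mem_piFinset] at hpi
    rw [mem_adm]
    refine ⟨fun i => hpi _, fun ℓ h1 h2 => ?_⟩
    rw [psum_init η h2]
    exact hadm ℓ h1 (by omega)
  · intro b _
    refine le_trans (Finset.card_le_card_of_injOn (t := Finset.Icc 1 M)
      (fun η => η (Fin.last m)) ?_ ?_) (by simp)
    · intro η hη
      simp only [Finset.mem_coe, Finset.mem_filter] at hη
      have := hη.1.1
      rw [Fintype.mem_piFinset] at this
      exact this _
    · intro η hη η' hη' hlast
      simp only [Finset.coe_filter, Set.mem_setOf_eq] at hη hη'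
      simp only at hlast
      rw [← Fin.snoc_init_self η, ← Fin.snoc_init_self η', hη.2, hη'.2, hlast]


lemma primeCounting_eq_card (n : ℕ) :
    Nat.primeCounting n = ((Finset.range (n+1)).filter Nat.Prime).card := by
  rw [Nat.primeCounting, Nat.primeCounting', Nat.count_eq_card_filter_range]

lemma cheb_nat (n : ℕ) (hn : 1 ≤ n) :
    4 ^ n ≤ 2 * n * (2*n) ^ Nat.primeCounting (2*n) := by
  have h1 : Nat.centralBinom n ≤ (2*n) ^ Nat.primeCounting (2*n) := by
    have hne : Nat.centralBinom n ≠ 0 := Nat.centralBinom_ne_zero n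
    conv_lhs => rw [← Nat.factorization_prod_pow_eq_self hne]
    rw [Finsupp.prod]
    have hsub : (Nat.centralBinom n).factorization.support
        ⊆ (Finset.range (2*n+1)).filter Nat.Prime := by
      intro p hp
      have hp' := hp
      rw [Nat.support_factorization] at hp'
      have hprime : p.Prime := Nat.prime_of_mem_primeFactors hp'
      have hν : 1 ≤ (Nat.centralBinom n).factorization p := by
        rw [Finsupp.mem_support_iff] at hp
        omega
      have hple : p ≤ 2 * n := by
        calc p = p ^ 1 := (pow_one p).symm
          _ ≤ p ^ ((Nat.centralBinom n).factorization p) :=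
            Nat.pow_le_pow_right hprime.one_lt.le hν
          _ ≤ 2 * n := by
            rw [Nat.centralBinom]
            exact Nat.pow_factorization_choose_le (by omega)
      rw [Finset.mem_filter, Finset.mem_range]
      exact ⟨by omega, hprime⟩
    calc ∏ p ∈ (Nat.centralBinom n).factorization.support,
          p ^ (Nat.centralBinom n).factorization p
        ≤ ∏ _p ∈ (Nat.centralBinom n).factorization.support, 2*n := by
          apply Finset.prod_le_prod'
          intro p hp
          rw [Nat.centralBinom]
          exact Nat.pow_factorization_choose_le (by omega)
      _ = (2*n) ^ (Nat.centralBinom n).factorization.support.card :=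
          Finset.prod_const _
      _ ≤ (2*n) ^ Nat.primeCounting (2*n) := by
          apply Nat.pow_le_pow_right (by omega)
          rw [primeCounting_eq_card]
          exact Finset.card_le_card hsub
  calc 4 ^ n ≤ 2 * n * Nat.centralBinom n :=
        Nat.four_pow_le_two_mul_self_mul_centralBinom n hn
    _ ≤ 2 * n * (2*n) ^ Nat.primeCounting (2*n) := Nat.mul_le_mul_left _ h1


set_option maxHeartbeats 2000000 in
lemma pi_lower {M r : ℕ} (hM : 2^21 ≤ M) (hr : M^2 + 1 ≤ r) :
    4 * (M:ℝ) * Real.log r ≤ (Nat.primeCounting (r-1) : ℝ) := by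
  have hM2 : 2 ≤ M := le_trans (by norm_num) hM
  have hrbig : 2^42 < r := by
    have h : 2^42 ≤ M^2 := by
      calc (2:ℕ)^42 = (2^21)^2 := by norm_num
        _ ≤ M^2 := Nat.pow_le_pow_left hM 2
    omega
  set n := (r-1)/2 with hn
  have hn1 : 1 ≤ n := by omega
  have h2n : 2*n ≤ r - 1 := by omega
  have h2n' : r - 2 ≤ 2*n := by omega
  have hr0 : (0:ℝ) < (r:ℝ) := by
    have : 0 < r := by omega
    exact_mod_cast this
  have hr2 : (2:ℝ) ≤ (r:ℝ) := by exact_mod_cast (by omega : 2 ≤ r)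
  have hr4 : (4:ℝ) ≤ (r:ℝ) := by exact_mod_cast (by omega : 4 ≤ r)
  have hrM : ((M:ℝ))^2 ≤ (r:ℝ) := by exact_mod_cast (by omega : M^2 ≤ r)
  have hlogr_pos : 0 < Real.log r := Real.log_pos (by linarith)
  -- Chebyshev, real version
  have hcheb := cheb_nat n hn1
  have h2npos : (0:ℝ) < ((2*n : ℕ):ℝ) := by exact_mod_cast (by omega : 0 < 2*n)
  have hchebR : (n:ℝ) * Real.log 4
      ≤ (1 + (Nat.primeCounting (2*n) : ℝ)) * Real.log ((2*n : ℕ):ℝ) := by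
    have h4 : ((4:ℝ))^n ≤ ((2*n:ℕ):ℝ) * ((2*n:ℕ):ℝ) ^ Nat.primeCounting (2*n) := by
      exact_mod_cast hcheb
    have hlog := Real.log_le_log (by positivity) h4
    rw [Real.log_pow, Real.log_mul (ne_of_gt h2npos) (by positivity), Real.log_pow] at hlog
    push_cast at hlog ⊢
    nlinarith [hlog]
  have h2nler : ((2*n:ℕ):ℝ) ≤ (r:ℝ) := by exact_mod_cast (by omega : 2*n ≤ r)
  have hlog2n : Real.log ((2*n:ℕ):ℝ) ≤ Real.log (r:ℝ) := Real.log_le_log h2npos h2nler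
  have hπmono : (Nat.primeCounting (2*n) : ℝ) ≤ (Nat.primeCounting (r-1) : ℝ) := by
    exact_mod_cast Nat.monotone_primeCounting h2n
  have hπ0 : (0:ℝ) ≤ (Nat.primeCounting (2*n) : ℝ) := by positivity
  have hA : (n:ℝ) * Real.log 4 ≤ (1 + (Nat.primeCounting (r-1):ℝ)) * Real.log r := by
    calc (n:ℝ) * Real.log 4
        ≤ (1 + (Nat.primeCounting (2*n) : ℝ)) * Real.log ((2*n : ℕ):ℝ) := hchebR
      _ ≤ (1 + (Nat.primeCounting (2*n) : ℝ)) * Real.log r := by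
          apply mul_le_mul_of_nonneg_left hlog2n (by linarith)
      _ ≤ (1 + (Nat.primeCounting (r-1):ℝ)) * Real.log r := by
          apply mul_le_mul_of_nonneg_right (by linarith) (le_of_lt hlogr_pos)
  -- the auxiliary quantity u = r^(1/8)
  set u := (r:ℝ) ^ ((1:ℝ)/8) with hu
  have hu1 : 1 ≤ u := Real.one_le_rpow (by linarith) (by norm_num)
  have hu8 : u^8 = (r:ℝ) := by
    rw [hu, ← Real.rpow_natCast ((r:ℝ)^((1:ℝ)/8)) 8, ← Real.rpow_mul (le_of_lt hr0)]
    norm_num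
  have hlogu : Real.log r ≤ 8 * u := by
    have h1 : Real.log u = (1/8) * Real.log r := Real.log_rpow hr0 _
    have h2 : Real.log u ≤ u :=
      le_trans (Real.log_le_sub_one_of_pos (by linarith)) (by linarith)
    linarith
  have hMu : (M:ℝ) ≤ u^4 := by
    have h1 : ((M:ℝ))^2 ≤ (u^4)^2 := by
      rw [← pow_mul]
      norm_num
      rw [hu8]
      exact hrM
    exact le_of_pow_le_pow_left₀ (by norm_num) (by positivity) h1
  have hu2 : (1056:ℝ) ≤ u^2 := by
    have h1 : (1056:ℝ)^4 ≤ (u^2)^4 := by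
      rw [← pow_mul]
      norm_num
      rw [hu8]
      have : ((2:ℝ))^42 ≤ (r:ℝ) := by exact_mod_cast (le_of_lt hrbig)
      nlinarith [this]
    exact le_of_pow_le_pow_left₀ (by norm_num) (by positivity) h1
  have hlog4 : 1 ≤ Real.log 4 := by
    rw [Real.le_log_iff_exp_le (by norm_num)]
    have := Real.exp_one_lt_d9
    linarith
  have hnr : ((r:ℝ)-2)/2 ≤ (n:ℝ) := by
    have h1 : (r - 2 : ℕ) ≤ 2*n := h2n'
    have h2 : ((r - 2 : ℕ) : ℝ) ≤ ((2*n : ℕ) : ℝ) := by exact_mod_cast h1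
    have h3 : ((r - 2 : ℕ) : ℝ) = (r:ℝ) - 2 := by
      have : 2 ≤ r := by omega
      push_cast [this]
      ring
    rw [h3] at h2
    push_cast at h2
    linarith
  -- the main estimate
  have hfinal : (4 * (M:ℝ) * Real.log r + 1) * Real.log r ≤ (n:ℝ) * Real.log 4 := by
    have s0 : (M:ℝ) * Real.log r ≤ u^4 * (8*u) :=
      mul_le_mul hMu hlogu (le_of_lt hlogr_pos) (by positivity)
    have s1 : 4 * (M:ℝ) * Real.log r + 1 ≤ 32*u^5 + 1 := by nlinarith [s0]
    have s2 : (4 * (M:ℝ) * Real.log r + 1) * Real.log r ≤ (32*u^5 + 1) * (8*u) := by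
      apply mul_le_mul s1 hlogu (le_of_lt hlogr_pos) (by positivity)
    have hu6 : u ≤ u^6 := by
      calc u = u^1 := (pow_one u).symm
        _ ≤ u^6 := pow_le_pow_right₀ hu1 (by norm_num)
    have s3 : (32*u^5 + 1) * (8*u) ≤ 264 * u^6 := by
      have e : (32*u^5 + 1) * (8*u) = 256*u^6 + 8*u := by ring
      rw [e]
      linarith [hu6]
    have s4 : 264 * u^6 ≤ u^8/4 := by
      have h6 : (0:ℝ) ≤ u^6 := pow_nonneg (le_trans zero_le_one hu1) 6
      have h7 : 1056 * u^6 ≤ u^2 * u^6 := mul_le_mul_of_nonneg_right hu2 h6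
      have e : u^2 * u^6 = u^8 := by ring
      rw [e] at h7
      linarith
    have s5 : u^8/4 ≤ ((r:ℝ)-2)/2 := by rw [hu8]; linarith
    have s6 : ((r:ℝ)-2)/2 ≤ (n:ℝ) * Real.log 4 := by
      calc ((r:ℝ)-2)/2 ≤ (n:ℝ) := hnr
        _ = (n:ℝ) * 1 := (mul_one _).symm
        _ ≤ (n:ℝ) * Real.log 4 := by
            apply mul_le_mul_of_nonneg_left hlog4 (by positivity)
    linarith
  have hdiv : 4 * (M:ℝ) * Real.log r + 1 ≤ 1 + (Nat.primeCounting (r-1):ℝ) := by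
    have := le_trans hfinal hA
    exact le_of_mul_le_mul_right (by linarith [this]) hlogr_pos
  linarith


lemma PrP_nonneg (M r : ℕ) : 0 ≤ PrP M r := by
  unfold PrP
  positivity

set_option maxHeartbeats 1000000 in
lemma term_bound {M r : ℕ} (hM1 : 2^21 ≤ M) (hr : M^2 + 1 ≤ r) :
    (r:ℝ) * PrP M r ≤ 1/(r:ℝ)^3 := by
  have hM2 : 2 ≤ M := le_trans (by norm_num) hM1
  have hr1 : 1 ≤ r := by
    have : 1 ≤ M^2 + 1 := by omega
    omega
  have hrpos : (0:ℝ) < (r:ℝ) := by exact_mod_cast (by omega : 0 < r)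
  have hMpos : (0:ℝ) < (M:ℝ) := by exact_mod_cast (by omega : 0 < M)
  have hMr : (0:ℝ) < (M:ℝ)^r := by positivity
  set θ := ((M:ℝ)-1)/(M:ℝ) with hθ
  set k := Nat.primeCounting (r-1) with hk
  -- step 1 : PrP M r ≤ θ ^ k
  have hPrP : PrP M r ≤ θ ^ k := by
    unfold PrP
    rw [div_le_iff₀ hMr]
    have hc1 : ((((Fintype.piFinset fun _ : Fin r => Finset.Icc 1 M).filter
        (fun η => IsAdmissible r η ∧ Nat.Prime (∑ i, η i))).card : ℕ) : ℝ)
        ≤ (M:ℝ) * ((adm M (r-1)).card : ℝ) := by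
      exact_mod_cast card_S_le M r hr1
    have hc2 : ((adm M (r-1)).card : ℝ) ≤ (M:ℝ)^(r-1) * θ ^ k :=
      card_adm_le hM2 (r-1)
    have hpow : (M:ℝ)^r = (M:ℝ)^(r-1) * (M:ℝ) := by
      rw [← pow_succ]
      congr 1
      omega
    calc ((((Fintype.piFinset fun _ : Fin r => Finset.Icc 1 M).filter
        (fun η => IsAdmissible r η ∧ Nat.Prime (∑ i, η i))).card : ℕ) : ℝ)
        ≤ (M:ℝ) * ((adm M (r-1)).card : ℝ) := hc1
      _ ≤ (M:ℝ) * ((M:ℝ)^(r-1) * θ ^ k) := by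
          exact mul_le_mul_of_nonneg_left hc2 (le_of_lt hMpos)
      _ = θ ^ k * (M:ℝ)^r := by rw [hpow]; ring
  -- step 2 : θ ^ k ≤ exp (-(k/M))
  have hθ0 : 0 ≤ θ := by
    rw [hθ]
    apply div_nonneg _ (le_of_lt hMpos)
    have : (2:ℝ) ≤ (M:ℝ) := by exact_mod_cast hM2
    linarith
  have hθe : θ ≤ Real.exp (-(1/(M:ℝ))) := by
    have h1 := Real.add_one_le_exp (-(1/(M:ℝ)))
    have h2 : θ = 1 - 1/(M:ℝ) := by rw [hθ]; field_simp
    rw [h2]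
    linarith
  have hexpk : θ ^ k ≤ Real.exp (-((k:ℝ)/(M:ℝ))) := by
    calc θ ^ k ≤ (Real.exp (-(1/(M:ℝ)))) ^ k := pow_le_pow_left₀ hθ0 hθe k
      _ = Real.exp ((k:ℝ) * (-(1/(M:ℝ)))) := (Real.exp_nat_mul _ k).symm
      _ = Real.exp (-((k:ℝ)/(M:ℝ))) := by ring_nf
  -- step 3 : exp (-(k/M)) ≤ exp (-(4 log r)) = 1/r^4
  have hπ := pi_lower hM1 hr
  have hexp2 : Real.exp (-((k:ℝ)/(M:ℝ))) ≤ Real.exp (-(4*Real.log r)) := by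
    apply Real.exp_le_exp.mpr
    have h3 : 4*Real.log r ≤ (k:ℝ)/(M:ℝ) := by
      rw [le_div_iff₀ hMpos]
      calc 4*Real.log r * (M:ℝ) = 4 * (M:ℝ) * Real.log r := by ring
        _ ≤ (k:ℝ) := hπ
    linarith
  have hexp3 : Real.exp (-(4*Real.log r)) = 1/(r:ℝ)^4 := by
    rw [Real.exp_neg]
    have h4 : (4:ℝ)*Real.log r = ((4:ℕ):ℝ) * Real.log r := by norm_num
    rw [h4, Real.exp_nat_mul, Real.exp_log hrpos, one_div]
  -- combine
  have hPrP2 : PrP M r ≤ 1/(r:ℝ)^4 := by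
    calc PrP M r ≤ θ ^ k := hPrP
      _ ≤ Real.exp (-((k:ℝ)/(M:ℝ))) := hexpk
      _ ≤ Real.exp (-(4*Real.log r)) := hexp2
      _ = 1/(r:ℝ)^4 := hexp3
  calc (r:ℝ) * PrP M r ≤ (r:ℝ) * (1/(r:ℝ)^4) := by
        exact mul_le_mul_of_nonneg_left hPrP2 (le_of_lt hrpos)
    _ = 1/(r:ℝ)^3 := by field_simp

lemma basel_partial (n : ℕ) : ∑ i ∈ Finset.range n, (1:ℝ)/((i:ℝ)+1)^2 ≤ 2 := by
  have aux : ∀ m : ℕ, ∑ i ∈ Finset.range (m+1), (1:ℝ)/((i:ℝ)+1)^2 ≤ 2 - 1/((m:ℝ)+1) := by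
    intro m
    induction m with
    | zero => norm_num
    | succ m ih =>
      rw [Finset.sum_range_succ]
      have hx : (0:ℝ) < (m:ℝ)+1 := by positivity
      have hx2 : (0:ℝ) < (m:ℝ)+2 := by positivity
      have e : 1/((m:ℝ)+1) - 1/((m:ℝ)+2) = 1/(((m:ℝ)+1)*((m:ℝ)+2)) := by
        field_simp
        ring
      have hkey : (1:ℝ)/(((m:ℝ)+2))^2 ≤ 1/(((m:ℝ)+1)*((m:ℝ)+2)) := by
        apply one_div_le_one_div_of_le (by positivity)
        nlinarith
      have hterm : (1:ℝ)/(((m+1:ℕ):ℝ)+1)^2 ≤ 1/((m:ℝ)+1) - 1/((m:ℝ)+2) := by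
        push_cast
        rw [e]
        convert hkey using 3
        ring
      have hgoal : ((m+1:ℕ):ℝ) + 1 = (m:ℝ)+2 := by push_cast; ring
      rw [hgoal]
      linarith
  cases n with
  | zero => simp
  | succ m =>
    refine le_trans (aux m) ?_
    have : (0:ℝ) < 1/((m:ℝ)+1) := by positivity
    linarith

lemma summable_aux : Summable (fun i : ℕ => (1:ℝ)/((i:ℝ)+1)^2) := by
  have h0 : Summable (fun n : ℕ => (1:ℝ)/(n:ℝ)^2) :=
    Real.summable_one_div_nat_pow.mpr (by norm_num)
  have h1 := (summable_nat_add_iff 1).mpr h0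
  refine h1.congr ?_
  intro i
  push_cast
  ring

lemma tsum_aux : ∑' i : ℕ, (1:ℝ)/((i:ℝ)+1)^2 ≤ 2 :=
  Real.tsum_le_of_sum_range_le (fun n => by positivity) basel_partial

end FarTailAux

/-- As M → ∞, the tail sum ∑_{r ≥ R₂+1} r·Pr_P(r) → 0, where R₂ = M². -/
theorem far_tail_tendsto_zero :
    ∀ ε : ℝ, 0 < ε → ∃ M₀ : ℕ, ∀ M : ℕ, M₀ ≤ M →
      Summable (fun r : ℕ => if M ^ 2 + 1 ≤ r then (r : ℝ) * PrP M r else 0) ∧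
      (∑' r : ℕ, if M ^ 2 + 1 ≤ r then (r : ℝ) * PrP M r else 0) ≤ ε := by
  intro ε hε
  refine ⟨max (2^21) (⌈(12:ℝ)/ε⌉₊ + 1), fun M hM => ?_⟩
  have hM1 : 2^21 ≤ M := le_trans (le_max_left _ _) hM
  have hM2 : 2 ≤ M := le_trans (by norm_num) hM1
  have hMpos : (0:ℝ) < (M:ℝ) := by exact_mod_cast (by omega : 0 < M)
  have hM1R : (1:ℝ) ≤ (M:ℝ) := by exact_mod_cast (by omega : 1 ≤ M)
  have hMe : (12:ℝ)/ε ≤ (M:ℝ) := by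
    have h1 : (⌈(12:ℝ)/ε⌉₊ + 1 : ℕ) ≤ M := le_trans (le_max_right _ _) hM
    calc (12:ℝ)/ε ≤ (⌈(12:ℝ)/ε⌉₊:ℝ) := Nat.le_ceil _
      _ ≤ (M:ℝ) := by exact_mod_cast (by omega : (⌈(12:ℝ)/ε⌉₊ : ℕ) ≤ M)
  have hf0 : ∀ r : ℕ, 0 ≤ (if M ^ 2 + 1 ≤ r then (r : ℝ) * PrP M r else 0) := by
    intro r
    by_cases h : M ^ 2 + 1 ≤ r
    · rw [if_pos h]
      exact mul_nonneg (Nat.cast_nonneg _) (FarTailAux.PrP_nonneg M r)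
    · rw [if_neg h]
  have hfg : ∀ r : ℕ, (if M ^ 2 + 1 ≤ r then (r : ℝ) * PrP M r else 0)
      ≤ (4:ℝ)/(M:ℝ)^2 * ((1:ℝ)/((r:ℝ)+1)^2) := by
    intro r
    by_cases h : M ^ 2 + 1 ≤ r
    · rw [if_pos h]
      have h1 := FarTailAux.term_bound hM1 h
      have hr1 : (1:ℝ) ≤ (r:ℝ) := by exact_mod_cast (by omega : 1 ≤ r)
      have hrM : ((M:ℝ))^2 ≤ (r:ℝ) := by exact_mod_cast (by omega : M^2 ≤ r)
      refine le_trans h1 ?_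
      rw [div_mul_div_comm, div_le_div_iff₀ (by positivity) (by positivity)]
      have hsq : ((r:ℝ)+1)^2 ≤ 4*(r:ℝ)^2 := by nlinarith
      have hmul : (M:ℝ)^2 * (((r:ℝ)+1)^2) ≤ (r:ℝ) * (4*(r:ℝ)^2) :=
        mul_le_mul hrM hsq (by positivity) (by linarith)
      nlinarith [hmul]
    · rw [if_neg h]
      positivity
  have hg_sum : Summable (fun r : ℕ => (4:ℝ)/(M:ℝ)^2 * ((1:ℝ)/((r:ℝ)+1)^2)) :=
    FarTailAux.summable_aux.mul_left _
  have hf_sum : Summable (fun r : ℕ => if M ^ 2 + 1 ≤ r then (r : ℝ) * PrP M r else 0) :=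
    Summable.of_nonneg_of_le hf0 hfg hg_sum
  refine ⟨hf_sum, ?_⟩
  have h12 : (12:ℝ) ≤ (M:ℝ)*ε := by
    rw [div_le_iff₀ hε] at hMe
    exact hMe
  calc (∑' r : ℕ, if M ^ 2 + 1 ≤ r then (r : ℝ) * PrP M r else 0)
      ≤ ∑' r : ℕ, (4:ℝ)/(M:ℝ)^2 * ((1:ℝ)/((r:ℝ)+1)^2) :=
        Summable.tsum_le_tsum hfg hf_sum hg_sum
    _ = (4:ℝ)/(M:ℝ)^2 * ∑' r : ℕ, (1:ℝ)/((r:ℝ)+1)^2 := tsum_mul_left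
    _ ≤ (4:ℝ)/(M:ℝ)^2 * 2 := by
        apply mul_le_mul_of_nonneg_left FarTailAux.tsum_aux (by positivity)
    _ = 8/(M:ℝ)^2 := by ring
    _ ≤ 12/(M:ℝ) := by
        rw [div_le_div_iff₀ (by positivity) hMpos]
        nlinarith [hM1R]
    _ ≤ ε := by
        rw [div_le_iff₀ hMpos]
        linarith
end
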